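/- (Definability Lemma) Let A be a finite alphabet, M = (F,θ) a k-model on a Kripke frame F = (X,(R_◇)_{◇∈A}) such that R_F = ⋃_{◇∈A} R_◇ is m-transitive. Let Y be a nonempty upset of F, ∼ the equivalence on X relating points satisfying the same k-formulas in M, and ∼_Y its restriction to Y. Assume the quotient Y/∼_Y is finite, and for each class τ ∈ Y/∼_Y fix a k-formula α(τ) whose extension in the restricted model M↾Y is exactly τ and such that, for each l < k and every point b of M with M,b ⊨ α(τ), b satisfies p_l in M iff the points of τ do. Define the relation Ṙ_◇ on Y/∼_Y by: τ₁ Ṙ_◇ τ₂ iff a R_◇ b for some a ∈ τ₁, b ∈ τ₂. Let □*χ denote ¬◇_A^{≤m}¬χ, and let γ be the conjunction of: □*⋀{α(τ₁) → ◇α(τ₂) : ◇ ∈ A, τ₁ Ṙ_◇ τ₂}, □*⋀{α(τ₁) → ¬◇α(τ₂) : ◇ ∈ A, not τ₁ Ṙ_◇ τ₂}, and □*⋁{α(τ) : τ ∈ Y/∼_Y}. For a ∈ Y put β(a) = α([a]_{∼_Y}) ∧ γ. Then for every a ∈ Y and every point b of M: M,b ⊨ β(a) if and only if a ∼ b. 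-/
import Mathlib


set_option maxHeartbeats 1000000

/-- Modal formulas over an alphabet `A` of diamonds, with variables `pₙ`,
falsum and implication as primitive Boolean connectives. -/
inductive MF (A : Type) : Type
  | var : ℕ → MF A
  | bot : MF A
  | imp : MF A → MF A → MF A
  | dia : A → MF A → MF A

namespace MF

variable {A : Type}

def neg (φ : MF A) : MF A := .imp φ .bot
def top : MF A := neg .bot
def or (φ ψ : MF A) : MF A := .imp (neg φ) ψ
def and (φ ψ : MF A) : MF A := neg (.imp φ (neg ψ))
def box (a : A) (φ : MF A) : MF A := neg (.dia a (neg φ))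
def iff (φ ψ : MF A) : MF A := and (.imp φ ψ) (.imp ψ φ)

def bigOr : List (MF A) → MF A
  | [] => .bot
  | φ :: r => or φ (bigOr r)

def bigAnd : List (MF A) → MF A
  | [] => top
  | φ :: r => and φ (bigAnd r)

def subst (σ : ℕ → MF A) : MF A → MF A
  | .var n => σ n
  | .bot => .bot
  | .imp φ ψ => .imp (subst σ φ) (subst σ ψ)
  | .dia a φ => .dia a (subst σ φ)

/-- `φ` is a `k`-formula: all its variables are among `p₀,…,p_{k-1}`. -/
def varsBelow (k : ℕ) : MF A → Prop
  | .var n => n < k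
  | .bot => True
  | .imp φ ψ => varsBelow k φ ∧ varsBelow k ψ
  | .dia _ φ => varsBelow k φ

/-- Modal depth: maximal number of nested modalities. -/
def depth : MF A → ℕ
  | .var _ => 0
  | .bot => 0
  | .imp φ ψ => max (depth φ) (depth ψ)
  | .dia _ φ => depth φ + 1

end MF

/-- Truth in a Kripke model `(X, R, θ)` at a point. -/
def satM {A X : Type} (R : A → X → X → Prop) (θ : ℕ → Set X) : X → MF A → Prop
  | w, MF.var n => w ∈ θ n
  | _, MF.bot => False
  | w, MF.imp φ ψ => satM R θ w φ → satM R θ w ψ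
  | w, MF.dia a φ => ∃ v, R a w v ∧ satM R θ v φ

/-- Validity in a Kripke frame. -/
def validM {A X : Type} (R : A → X → X → Prop) (φ : MF A) : Prop :=
  ∀ θ w, satM R θ w φ

/-- `φ` is a substitution instance of a classical propositional tautology
(equivalently: true under every Boolean valuation treating variables and
diamond formulas as atoms). -/
def IsTautInstance {A : Type} (φ : MF A) : Prop :=
  ∀ f : MF A → Prop, ¬ f .bot → (∀ ψ χ, f (.imp ψ χ) ↔ (f ψ → f χ)) → f φ

/-- `L` is a normal modal logic over `A`. -/
structure IsNormalLogic {A : Type} (L : Set (MF A)) : Prop where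
  taut : ∀ φ : MF A, IsTautInstance φ → φ ∈ L
  dia_bot : ∀ a : A, (MF.dia a MF.bot).neg ∈ L
  dia_or : ∀ a : A,
    MF.imp (.dia a (MF.or (.var 0) (.var 1))) (MF.or (.dia a (.var 0)) (.dia a (.var 1))) ∈ L
  mp : ∀ {φ ψ : MF A}, MF.imp φ ψ ∈ L → φ ∈ L → ψ ∈ L
  subst_mem : ∀ {φ : MF A} (σ : ℕ → MF A), φ ∈ L → φ.subst σ ∈ L
  mono : ∀ (a : A) {φ ψ : MF A}, MF.imp φ ψ ∈ L → MF.imp (.dia a φ) (.dia a ψ) ∈ L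

/-- `L` is `k`-finite: there are finitely many `k`-formulas up to `L`-equivalence. -/
def kFinite {A : Type} (L : Set (MF A)) (k : ℕ) : Prop :=
  ∃ S : Finset (MF A), ∀ φ : MF A, φ.varsBelow k → ∃ ψ ∈ S, MF.iff φ ψ ∈ L

def LocallyTabular {A : Type} (L : Set (MF A)) : Prop := ∀ k : ℕ, kFinite L k

/-- `◇_S φ`, the disjunction of `◇φ` over `◇ ∈ S`. -/
noncomputable def diaS {A : Type} (S : Finset A) (φ : MF A) : MF A :=
  MF.bigOr (S.toList.map (fun a => MF.dia a φ))

/-- `(◇_S)^n φ`. -/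
noncomputable def diaSpow {A : Type} (S : Finset A) : ℕ → MF A → MF A
  | 0, φ => φ
  | n + 1, φ => diaS S (diaSpow S n φ)

/-- `◇_S^{≤ m} φ = ⋁_{i ≤ m} (◇_S)^i φ`. -/
noncomputable def diaSle {A : Type} (S : Finset A) (m : ℕ) (φ : MF A) : MF A :=
  MF.bigOr ((List.range (m + 1)).map (fun i => diaSpow S i φ))

/-- `□* φ = ¬◇_S^{≤ m}¬φ`. -/
noncomputable def boxSle {A : Type} (S : Finset A) (m : ℕ) (φ : MF A) : MF A :=
  MF.neg (diaSle S m (MF.neg φ))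

/-- The pretransitivity formula `atr_S(m) = (◇_S)^{m+1} p₀ → ◇_S^{≤m} p₀`. -/
noncomputable def atrS {A : Type} (S : Finset A) (m : ℕ) : MF A :=
  MF.imp (diaSpow S (m + 1) (.var 0)) (diaSle S m (.var 0))

/-- The finite-height formulas `B_h^{≤m}` over the compound modality `◇_S^{≤m}`:
`B₀ = ⊥`, `B_h = p_h → □*(◇* p_h ∨ B_{h-1})`. -/
noncomputable def BstarS {A : Type} (S : Finset A) (m : ℕ) : ℕ → MF A
  | 0 => .bot
  | h + 1 => MF.imp (.var (h + 1))
      (boxSle S m (MF.or (diaSle S m (.var (h + 1))) (BstarS S m h)))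

/-- Unimodal finite-height formulas: `B₀ = ⊥`, `B_h = p_h → □(◇ p_h ∨ B_{h-1})`. -/
def BformU : ℕ → MF Unit
  | 0 => .bot
  | h + 1 => MF.imp (.var (h + 1))
      (MF.box () (MF.or (MF.dia () (.var (h + 1))) (BformU h)))

/-- `p_i ∧ ◇_S (p_{i+1} ∧ ◇_S ( … ∧ ◇_S p_{i+n}) … )`. -/
noncomputable def chainS {A : Type} (S : Finset A) : ℕ → ℕ → MF A
  | i, 0 => .var i
  | i, n + 1 => MF.and (.var i) (diaS S (chainS S (i + 1) n))

/-- The list of pairs `(i, j)` with `i < j ≤ n`. -/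
def pairsLT (n : ℕ) : List (ℕ × ℕ) :=
  (List.range (n + 1)).flatMap (fun j => (List.range j).map (fun i => (i, j)))

/-- The reducible-path formula `R_m(◇_S)`. -/
noncomputable def RmS {A : Type} (S : Finset A) (m : ℕ) : MF A :=
  MF.imp (chainS S 0 (m + 1))
    (MF.or
      (MF.bigOr ((pairsLT (m + 1)).map
        (fun p => diaSpow S p.1 (MF.and (.var p.1) (.var p.2)))))
      (MF.bigOr ((pairsLT m).map
        (fun p => diaSpow S p.1 (MF.and (.var p.1) (diaS S (.var (p.2 + 1))))))))

/-- `n`-fold relational composition: `R⁰ = Id`, `R^{n+1} = R ∘ Rⁿ`. -/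
def relPow {X : Type} (R : X → X → Prop) : ℕ → X → X → Prop
  | 0 => fun a b => a = b
  | n + 1 => fun a c => ∃ b, R a b ∧ relPow R n b c

/-- Reflexive transitive closure `R* = ⋃ₙ Rⁿ`. -/
def relStar {X : Type} (R : X → X → Prop) (a b : X) : Prop := ∃ n, relPow R n a b

/-- `R` is `m`-transitive: `R^{m+1} ⊆ R^{≤ m}`. -/
def mTransitive {X : Type} (R : X → X → Prop) (m : ℕ) : Prop :=
  ∀ a b, relPow R (m + 1) a b → ∃ i ≤ m, relPow R i a b

/-- The union `R_F = ⋃_{◇ ∈ A} R_◇`. -/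
def unionRel {A X : Type} (R : A → X → X → Prop) : X → X → Prop :=
  fun a b => ∃ i, R i a b

/-- `R⁻¹[V] = {x ∣ ∃ y ∈ V, x R y}`. -/
def diaPre {X : Type} (R : X → X → Prop) (V : Set X) : Set X := {x | ∃ y ∈ V, R x y}

/-- The height of `(X, R)` is at most `h`: there is no strictly ascending
(h+1)-chain with respect to `R*`. -/
def heightLE {X : Type} (R : X → X → Prop) (h : ℕ) : Prop :=
  ¬ ∃ x : ℕ → X, ∀ i < h, relStar R (x i) (x (i + 1)) ∧ ¬ relStar R (x (i + 1)) (x i)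

/-- A partition is `R`-tuned. -/
def RTuned {X : Type} (R : X → X → Prop) (𝒰 : Set (Set X)) : Prop :=
  ∀ U ∈ 𝒰, ∀ V ∈ 𝒰, (∃ a ∈ U, ∃ b ∈ V, R a b) → ∀ a ∈ U, ∃ b ∈ V, R a b

/-- A partition is tuned in the frame `(X, (R_◇)_{◇ ∈ A})`. -/
def TunedIn {A X : Type} (R : A → X → X → Prop) (𝒰 : Set (Set X)) : Prop :=
  ∀ a : A, RTuned (R a) 𝒰

/-- `𝒰` refines `𝒱`: every block of `𝒰` is included in a block of `𝒱`. -/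
def Refines {X : Type} (𝒰 𝒱 : Set (Set X)) : Prop := ∀ U ∈ 𝒰, ∃ V ∈ 𝒱, U ⊆ V

/-- The equivalence `≡_𝒱` induced by a family of sets. -/
def famEq {X : Type} (𝒱 : Set (Set X)) (a b : X) : Prop := ∀ V ∈ 𝒱, (a ∈ V ↔ b ∈ V)

/-- The set of equivalence classes of a relation. -/
def eqClasses {X : Type} (E : X → X → Prop) : Set (Set X) := {C | ∃ x, C = {y | E x y}}

/-- Tunedness condition for abstract normal operators `g_◇` on the powerset. -/
def gTuned {A X : Type} (g : A → Set X → Set X) (𝒰 : Set (Set X)) : Prop :=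
  ∀ a : A, ∀ U ∈ 𝒰, ∀ V ∈ 𝒰, (V ∩ g a U).Nonempty → V ⊆ g a U

/-- `C` is a subalgebra of the modal algebra `(𝒫(X), ∪, ∩, ᶜ, (g_◇))`. -/
def IsSubalg {A X : Type} (g : A → Set X → Set X) (C : Set (Set X)) : Prop :=
  ∅ ∈ C ∧ Set.univ ∈ C ∧ (∀ U ∈ C, ∀ V ∈ C, U ∪ V ∈ C) ∧
    (∀ U ∈ C, ∀ V ∈ C, U ∩ V ∈ C) ∧ (∀ U ∈ C, Uᶜ ∈ C) ∧ (∀ U ∈ C, ∀ a : A, g a U ∈ C)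

/-- The subalgebra generated by `𝒬`. -/
def genAlg {A X : Type} (g : A → Set X → Set X) (𝒬 : Set (Set X)) : Set (Set X) :=
  ⋂₀ {C | IsSubalg g C ∧ 𝒬 ⊆ C}

/-- Points of a model indistinguishable by `k`-formulas of depth at most `d`. -/
def modEq {A X : Type} (R : A → X → X → Prop) (θ : ℕ → Set X) (k d : ℕ) (a b : X) : Prop :=
  ∀ φ : MF A, φ.varsBelow k → φ.depth ≤ d → (satM R θ a φ ↔ satM R θ b φ)

/-- Points of a model indistinguishable by all `k`-formulas. -/
def modEqAll {A X : Type} (R : A → X → X → Prop) (θ : ℕ → Set X) (k : ℕ) (a b : X) : Prop :=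
  ∀ φ : MF A, φ.varsBelow k → (satM R θ a φ ↔ satM R θ b φ)

/-- The modal depth of the `k`-model `(X, R, θ)` is at most `d`. -/
def mdModelLE {A X : Type} (R : A → X → X → Prop) (θ : ℕ → Set X) (k d : ℕ) : Prop :=
  ∀ e : ℕ, modEq R θ k e ≠ modEq R θ k (e + 1) → e ≤ d

/-- Bundled Kripke frames over the alphabet `A`. -/
structure KFrame (A : Type) : Type 1 where
  W : Type
  R : A → W → W → Prop

/-- The logic of a class of Kripke frames. -/
def LogC {A : Type} (𝓕 : Set (KFrame A)) : Set (MF A) :=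
  {φ | ∀ F ∈ 𝓕, validM F.R φ}

/-- `Y` is an upset of the frame: `R_◇[Y] ⊆ Y` for every `◇`. -/
def UpsetIn {A X : Type} (R : A → X → X → Prop) (Y : Set X) : Prop :=
  ∀ a : A, ∀ y ∈ Y, ∀ z, R a y z → z ∈ Y

/-- The relations of a frame restricted to a subset. -/
def restrR {A X : Type} (R : A → X → X → Prop) (Y : Set X) : A → Y → Y → Prop :=
  fun a u v => R a u.val v.val

/-- A valuation restricted to a subset. -/
def restrV {X : Type} (θ : ℕ → Set X) (Y : Set X) : ℕ → Set Y :=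
  fun n => {u | u.val ∈ θ n}

/-- The restriction `F ↾ Y` of a frame to a subset of its domain. -/
def KFrame.restrict {A : Type} (F : KFrame A) (Y : Set F.W) : KFrame A :=
  ⟨Y, restrR F.R Y⟩

/-- The induced partitions `𝒱_d`: `𝒱₀ = X/≡_𝒱` and `𝒱_{d+1}` is the quotient by
the family `𝒱_d ∪ {R_◇⁻¹[V] : ◇ ∈ A, V ∈ 𝒱_d}`. -/
def stageClasses {A X : Type} (R : A → X → X → Prop) (𝒱 : Set (Set X)) : ℕ → Set (Set X)
  | 0 => eqClasses (famEq 𝒱)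
  | d + 1 =>
      eqClasses (famEq (stageClasses R 𝒱 d ∪
        {V' | ∃ a : A, ∃ V ∈ stageClasses R 𝒱 d, V' = diaPre (R a) V}))

/-- `𝒱_ω = ⋃_d 𝒱_d`. -/
def stageUnion {A X : Type} (R : A → X → X → Prop) (𝒱 : Set (Set X)) : Set (Set X) :=
  ⋃ d : ℕ, stageClasses R 𝒱 d

/-- `md(V) = min {d ∣ V ∈ 𝒱_d}` (as an extended natural). -/
noncomputable def mdBlock {A X : Type} (R : A → X → X → Prop) (𝒱 : Set (Set X))
    (V : Set X) : ℕ∞ :=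
  ⨅ d ∈ {d : ℕ | V ∈ stageClasses R 𝒱 d}, (d : ℕ∞)

/-- `md(𝒱) = sup {md(V) ∣ V ∈ 𝒱_ω}`. -/
noncomputable def mdFam {A X : Type} (R : A → X → X → Prop) (𝒱 : Set (Set X)) : ℕ∞ :=
  ⨆ V ∈ stageUnion R 𝒱, mdBlock R 𝒱 V

/-- The modal depth of a frame: `sup` of `md(𝒱)` over finite families `𝒱`. -/
noncomputable def mdFrame {A : Type} (F : KFrame A) : ℕ∞ :=
  ⨆ 𝒱 ∈ {𝒱 : Set (Set F.W) | 𝒱.Finite}, mdFam F.R 𝒱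

/-- The modal depth of a class of frames. -/
noncomputable def mdClass {A : Type} (𝓕 : Set (KFrame A)) : ℕ∞ :=
  ⨆ F ∈ 𝓕, mdFrame F

/-- `md(L) = sup_φ min {md(ψ) ∣ φ ↔ ψ ∈ L}`. -/
noncomputable def mdLogic {A : Type} (L : Set (MF A)) : ℕ∞ :=
  ⨆ φ : MF A, ⨅ ψ ∈ {ψ : MF A | MF.iff φ ψ ∈ L}, (ψ.depth : ℕ∞)

/-- `tra(𝓕)`: the least `m` such that every frame in `𝓕` is `m`-transitive. -/
noncomputable def traClass {A : Type} (𝓕 : Set (KFrame A)) : ℕ∞ :=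
  ⨅ m ∈ {m : ℕ | ∀ F ∈ 𝓕, mTransitive (unionRel F.R) m}, (m : ℕ∞)

/-- The disjoint sum of a family of frames. -/
def disjSum {A I : Type} (F : I → KFrame A) : KFrame A where
  W := Σ i : I, (F i).W
  R a x y := ∃ (i : I) (u v : (F i).W), x = ⟨i, u⟩ ∧ y = ⟨i, v⟩ ∧ (F i).R a u v

/-- The cluster of a point: its equivalence class under `a R* b ∧ b R* a`. -/
def clusterOf {X : Type} (R : X → X → Prop) (x : X) : Set X :=
  {y | relStar R x y ∧ relStar R y x}

/-- `clust(𝓕)`: the restrictions of frames in `𝓕` to their clusters. -/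
def clustC {A : Type} (𝓕 : Set (KFrame A)) : Set (KFrame A) :=
  {G | ∃ F ∈ 𝓕, ∃ x : F.W, G = F.restrict (clusterOf (unionRel F.R) x)}

open Classical in
/-- The Jankov–Fine style formula `γ(Y, Φ)`: under `□* = ¬◇_A^{≤m}¬`, the conjunction of
`α(τ₁) → ◇α(τ₂)` for `τ₁ Ṙ_◇ τ₂`, of `α(τ₁) → ¬◇α(τ₂)` for `¬(τ₁ Ṙ_◇ τ₂)`, and of the
disjunction `⋁ α(τ)` (with `Ts` enumerating the classes `τ`). -/
noncomputable def gammaF {A X : Type} [Fintype A] (R : A → X → X → Prop) (m : ℕ)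
    (Ts : List (Set X)) (α : Set X → MF A) : MF A :=
  MF.and
    (boxSle (Finset.univ : Finset A) m
      (MF.bigAnd ((Finset.univ : Finset A).toList.flatMap (fun i =>
        Ts.flatMap (fun τ₁ => Ts.map (fun τ₂ =>
          if ∃ a ∈ τ₁, ∃ b ∈ τ₂, R i a b then
            MF.imp (α τ₁) (MF.dia i (α τ₂))
          else
            MF.imp (α τ₁) (MF.neg (MF.dia i (α τ₂)))))))))
    (boxSle (Finset.univ : Finset A) m (MF.bigOr (Ts.map α)))

section AuxStmt15

variable {A X : Type}

lemma satM_imp (R : A → X → X → Prop) (θ : ℕ → Set X) (w : X) (φ ψ : MF A) :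
    satM R θ w (.imp φ ψ) ↔ (satM R θ w φ → satM R θ w ψ) := Iff.rfl

lemma satM_neg (R : A → X → X → Prop) (θ : ℕ → Set X) (w : X) (φ : MF A) :
    satM R θ w φ.neg ↔ ¬ satM R θ w φ := by
  simp [MF.neg, satM]

lemma satM_and (R : A → X → X → Prop) (θ : ℕ → Set X) (w : X) (φ ψ : MF A) :
    satM R θ w (φ.and ψ) ↔ satM R θ w φ ∧ satM R θ w ψ := by
  simp only [MF.and, MF.neg, satM]; tauto

lemma satM_or (R : A → X → X → Prop) (θ : ℕ → Set X) (w : X) (φ ψ : MF A) :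
    satM R θ w (φ.or ψ) ↔ satM R θ w φ ∨ satM R θ w ψ := by
  simp only [MF.or, MF.neg, satM]; tauto

lemma satM_bigOr (R : A → X → X → Prop) (θ : ℕ → Set X) (w : X) (l : List (MF A)) :
    satM R θ w (MF.bigOr l) ↔ ∃ φ ∈ l, satM R θ w φ := by
  induction l with
  | nil => simp [MF.bigOr, satM]
  | cons φ r ih => simp [MF.bigOr, satM_or, ih]

lemma satM_bigAnd (R : A → X → X → Prop) (θ : ℕ → Set X) (w : X) (l : List (MF A)) :
    satM R θ w (MF.bigAnd l) ↔ ∀ φ ∈ l, satM R θ w φ := by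
  induction l with
  | nil => simp [MF.bigAnd, MF.top, MF.neg, satM]
  | cons φ r ih => simp [MF.bigAnd, satM_and, ih]

lemma satM_diaS [Fintype A] (R : A → X → X → Prop) (θ : ℕ → Set X) (w : X) (φ : MF A) :
    satM R θ w (diaS Finset.univ φ) ↔ ∃ v, unionRel R w v ∧ satM R θ v φ := by
  simp only [diaS, satM_bigOr, List.mem_map, Finset.mem_toList, Finset.mem_univ, true_and,
    unionRel]
  constructor
  · rintro ⟨ψ, ⟨a, rfl⟩, hsat⟩
    obtain ⟨v, hv, h⟩ := hsat
    exact ⟨v, ⟨a, hv⟩, h⟩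
  · rintro ⟨v, ⟨a, hv⟩, h⟩
    exact ⟨.dia a φ, ⟨a, rfl⟩, ⟨v, hv, h⟩⟩

lemma satM_diaSpow [Fintype A] (R : A → X → X → Prop) (θ : ℕ → Set X) (φ : MF A) (n : ℕ) :
    ∀ w : X, satM R θ w (diaSpow Finset.univ n φ) ↔
      ∃ v, relPow (unionRel R) n w v ∧ satM R θ v φ := by
  induction n with
  | zero => intro w; simp [diaSpow, relPow]
  | succ n ih =>
    intro w
    simp only [diaSpow, satM_diaS, relPow]
    constructor
    · rintro ⟨u, hu, h⟩
      obtain ⟨v, hv, h'⟩ := (ih u).1 h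
      exact ⟨v, ⟨u, hu, hv⟩, h'⟩
    · rintro ⟨v, ⟨u, hu, hv⟩, h⟩
      exact ⟨u, hu, (ih u).2 ⟨v, hv, h⟩⟩

lemma satM_diaSle [Fintype A] (R : A → X → X → Prop) (θ : ℕ → Set X) (w : X) (φ : MF A)
    (m : ℕ) :
    satM R θ w (diaSle Finset.univ m φ) ↔
      ∃ i ≤ m, ∃ v, relPow (unionRel R) i w v ∧ satM R θ v φ := by
  simp only [diaSle, satM_bigOr, List.mem_map, List.mem_range, Nat.lt_succ_iff]
  constructor
  · rintro ⟨ψ, ⟨i, hi, rfl⟩, h⟩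
    exact ⟨i, hi, (satM_diaSpow R θ φ i w).1 h⟩
  · rintro ⟨i, hi, h⟩
    exact ⟨_, ⟨i, hi, rfl⟩, (satM_diaSpow R θ φ i w).2 h⟩

lemma satM_boxSle [Fintype A] (R : A → X → X → Prop) (θ : ℕ → Set X) (w : X) (φ : MF A)
    (m : ℕ) :
    satM R θ w (boxSle Finset.univ m φ) ↔
      ∀ i ≤ m, ∀ v, relPow (unionRel R) i w v → satM R θ v φ := by
  simp only [boxSle, satM_neg, satM_diaSle]
  constructor
  · intro h i hi v hv
    by_contra hc
    exact h ⟨i, hi, v, hv, (satM_neg R θ v φ).2 hc⟩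
  · rintro h ⟨i, hi, v, hv, hc⟩
    exact (satM_neg R θ v φ).1 hc (h i hi v hv)

lemma relPow_add' {R : X → X → Prop} :
    ∀ (p q : ℕ) (a c : X), relPow R (p + q) a c ↔ ∃ b, relPow R p a b ∧ relPow R q b c := by
  intro p
  induction p with
  | zero =>
    intro q a c
    simp [relPow, Nat.zero_add]
  | succ p ih =>
    intro q a c
    have : p + 1 + q = (p + q) + 1 := by omega
    rw [this]
    show (∃ b, R a b ∧ relPow R (p + q) b c) ↔ _
    constructor
    · rintro ⟨b, hb, h⟩
      obtain ⟨e, he, h'⟩ := (ih q b c).1 h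
      exact ⟨e, ⟨b, hb, he⟩, h'⟩
    · rintro ⟨e, ⟨b, hb, he⟩, h'⟩
      exact ⟨b, hb, (ih q b c).2 ⟨e, he, h'⟩⟩

lemma relPow_bound {R : X → X → Prop} {m : ℕ} (hm : mTransitive R m) :
    ∀ (n : ℕ) (a b : X), relPow R n a b → ∃ i ≤ m, relPow R i a b := by
  intro n
  induction n using Nat.strong_induction_on with
  | _ n ih =>
    intro a b h
    by_cases hn : n ≤ m
    · exact ⟨n, hn, h⟩
    · have hdec : n = (m + 1) + (n - (m + 1)) := by omega
      rw [hdec] at h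
      obtain ⟨c, h1, h2⟩ := (relPow_add' (m + 1) (n - (m + 1)) a b).1 h
      obtain ⟨i, hi, h1'⟩ := hm a c h1
      have h3 : relPow R (i + (n - (m + 1))) a b :=
        (relPow_add' i (n - (m + 1)) a b).2 ⟨c, h1', h2⟩
      exact ih (i + (n - (m + 1))) (by omega) a b h3

lemma boxSle_self [Fintype A] {R : A → X → X → Prop} {θ : ℕ → Set X} {w : X} {φ : MF A}
    {m : ℕ} (h : satM R θ w (boxSle Finset.univ m φ)) : satM R θ w φ :=
  (satM_boxSle R θ w φ m).1 h 0 (Nat.zero_le m) w rfl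

lemma boxSle_persist [Fintype A] {R : A → X → X → Prop} {θ : ℕ → Set X} {φ : MF A}
    {m : ℕ} (hm : mTransitive (unionRel R) m) {w v : X} {j : ℕ}
    (h : satM R θ w (boxSle Finset.univ m φ)) (hwv : relPow (unionRel R) j w v) :
    satM R θ v (boxSle Finset.univ m φ) := by
  rw [satM_boxSle] at h ⊢
  intro i hi u hu
  have : relPow (unionRel R) (j + i) w u := (relPow_add' j i w u).2 ⟨v, hwv, hu⟩
  obtain ⟨i', hi', h'⟩ := relPow_bound hm (j + i) w u this
  exact h i' hi' u h'

lemma satM_restrict {R : A → X → X → Prop} {θ : ℕ → Set X} {Y : Set X}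
    (hYup : UpsetIn R Y) (φ : MF A) :
    ∀ u : Y, satM (restrR R Y) (restrV θ Y) u φ ↔ satM R θ u.val φ := by
  induction φ with
  | var n => intro u; simp [satM, restrV, Set.mem_setOf_eq]
  | bot => intro u; simp [satM]
  | imp φ ψ ihφ ihψ => intro u; simp only [satM]; rw [ihφ u, ihψ u]
  | dia a φ ih =>
    intro u
    simp only [satM]
    constructor
    · rintro ⟨v, hv, h⟩
      exact ⟨v.val, hv, (ih v).1 h⟩
    · rintro ⟨v, hv, h⟩
      exact ⟨⟨v, hYup a u.val u.2 v hv⟩, hv, (ih _).2 h⟩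

lemma upset_relPow {R : A → X → X → Prop} {Y : Set X} (hYup : UpsetIn R Y) :
    ∀ (n : ℕ) (y z : X), y ∈ Y → relPow (unionRel R) n y z → z ∈ Y := by
  intro n
  induction n with
  | zero => intro y z hy h; exact h ▸ hy
  | succ n ih =>
    rintro y z hy ⟨u, ⟨a, ha⟩, h⟩
    exact ih u z (hYup a y hy u ha) h

lemma modEqAll_symm {R : A → X → X → Prop} {θ : ℕ → Set X} {k : ℕ} {a b : X}
    (h : modEqAll R θ k a b) : modEqAll R θ k b a := fun φ hφ => (h φ hφ).symm

lemma modEqAll_trans {R : A → X → X → Prop} {θ : ℕ → Set X} {k : ℕ} {a b c : X}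
    (h1 : modEqAll R θ k a b) (h2 : modEqAll R θ k b c) : modEqAll R θ k a c :=
  fun φ hφ => (h1 φ hφ).trans (h2 φ hφ)

lemma varsBelow_neg {k : ℕ} {φ : MF A} (h : φ.varsBelow k) : (φ.neg).varsBelow k :=
  ⟨h, trivial⟩

lemma varsBelow_and {k : ℕ} {φ ψ : MF A} (hφ : φ.varsBelow k) (hψ : ψ.varsBelow k) :
    (φ.and ψ).varsBelow k := ⟨⟨hφ, hψ, trivial⟩, trivial⟩

lemma varsBelow_or {k : ℕ} {φ ψ : MF A} (hφ : φ.varsBelow k) (hψ : ψ.varsBelow k) :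
    (φ.or ψ).varsBelow k := ⟨⟨hφ, trivial⟩, hψ⟩

lemma varsBelow_bigOr {k : ℕ} {l : List (MF A)} (h : ∀ φ ∈ l, φ.varsBelow k) :
    (MF.bigOr l).varsBelow k := by
  induction l with
  | nil => trivial
  | cons φ r ih =>
    exact varsBelow_or (h φ (by simp)) (ih fun ψ hψ => h ψ (by simp [hψ]))

lemma varsBelow_bigAnd {k : ℕ} {l : List (MF A)} (h : ∀ φ ∈ l, φ.varsBelow k) :
    (MF.bigAnd l).varsBelow k := by
  induction l with
  | nil => exact ⟨trivial, trivial⟩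
  | cons φ r ih =>
    exact varsBelow_and (h φ (by simp)) (ih fun ψ hψ => h ψ (by simp [hψ]))

lemma varsBelow_diaS [Fintype A] {k : ℕ} {φ : MF A} (h : φ.varsBelow k) :
    (diaS Finset.univ φ).varsBelow k := by
  apply varsBelow_bigOr
  intro ψ hψ
  simp only [List.mem_map] at hψ
  obtain ⟨a, -, rfl⟩ := hψ
  exact h

lemma varsBelow_diaSpow [Fintype A] {k : ℕ} {φ : MF A} (h : φ.varsBelow k) (n : ℕ) :
    (diaSpow Finset.univ n φ).varsBelow k := by
  induction n with
  | zero => exact h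
  | succ n ih => exact varsBelow_diaS ih

lemma varsBelow_diaSle [Fintype A] {k : ℕ} {φ : MF A} (h : φ.varsBelow k) (m : ℕ) :
    (diaSle Finset.univ m φ).varsBelow k := by
  apply varsBelow_bigOr
  intro ψ hψ
  simp only [List.mem_map] at hψ
  obtain ⟨i, -, rfl⟩ := hψ
  exact varsBelow_diaSpow h i

lemma varsBelow_boxSle [Fintype A] {k : ℕ} {φ : MF A} (h : φ.varsBelow k) (m : ℕ) :
    (boxSle Finset.univ m φ).varsBelow k :=
  varsBelow_neg (varsBelow_diaSle (varsBelow_neg h) m)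

lemma varsBelow_gammaF [Fintype A] {R : A → X → X → Prop} {m : ℕ} {k : ℕ}
    {Ts : List (Set X)} {α : Set X → MF A} (h : ∀ τ ∈ Ts, (α τ).varsBelow k) :
    (gammaF R m Ts α).varsBelow k := by
  apply varsBelow_and
  · apply varsBelow_boxSle
    apply varsBelow_bigAnd
    intro ψ hψ
    simp only [List.mem_flatMap, List.mem_map] at hψ
    obtain ⟨i, -, τ₁, hτ₁, τ₂, hτ₂, rfl⟩ := hψ
    split
    · exact ⟨h τ₁ hτ₁, h τ₂ hτ₂⟩
    · exact ⟨h τ₁ hτ₁, varsBelow_neg (h τ₂ hτ₂)⟩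
  · apply varsBelow_boxSle
    apply varsBelow_bigOr
    intro ψ hψ
    simp only [List.mem_map] at hψ
    obtain ⟨τ, hτ, rfl⟩ := hψ
    exact h τ hτ

lemma cls_eq' {A X : Type} {R : A → X → X → Prop} {θ : ℕ → Set X} {k : ℕ} {Y : Set X}
    {τ : Set X} {c' : X}
    (hτ : τ ∈ {τ : Set X | ∃ y ∈ Y, τ = {z | z ∈ Y ∧ modEqAll R θ k y z}})
    (hc' : c' ∈ τ) : τ = {z | z ∈ Y ∧ modEqAll R θ k c' z} := by
  obtain ⟨y, hy, rfl⟩ := hτ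
  obtain ⟨hc'Y, hyc'⟩ := hc'
  ext z
  simp only [Set.mem_setOf_eq]
  exact ⟨fun ⟨hz, hyz⟩ => ⟨hz, modEqAll_trans (modEqAll_symm hyc') hyz⟩,
    fun ⟨hz, h⟩ => ⟨hz, modEqAll_trans hyc' h⟩⟩

lemma mem_in_Y {A X : Type} {R : A → X → X → Prop} {θ : ℕ → Set X} {k : ℕ} {Y : Set X}
    {τ : Set X} {c' : X}
    (hτ : τ ∈ {τ : Set X | ∃ y ∈ Y, τ = {z | z ∈ Y ∧ modEqAll R θ k y z}})
    (hc' : c' ∈ τ) : c' ∈ Y := by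
  obtain ⟨y, hy, rfl⟩ := hτ
  exact hc'.1

lemma mainClaim {A X : Type} [Fintype A] (R : A → X → X → Prop) (θ : ℕ → Set X)
    (k m : ℕ) (hm : mTransitive (unionRel R) m)
    (Y : Set X) (hYup : UpsetIn R Y)
    (T : Set (Set X))
    (hT : T = {τ : Set X | ∃ y ∈ Y, τ = {z | z ∈ Y ∧ modEqAll R θ k y z}})
    (hTfin : T.Finite)
    (α : Set X → MF A)
    (hαvars : ∀ τ ∈ T, (α τ).varsBelow k)
    (hαext : ∀ τ ∈ T, ∀ u : Y, satM (restrR R Y) (restrV θ Y) u (α τ) ↔ (u : X) ∈ τ)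
    (hαatoms : ∀ τ ∈ T, ∀ l < k, ∀ b : X, satM R θ b (α τ) →
      ∀ y ∈ τ, (b ∈ θ l ↔ y ∈ θ l)) :
    ∀ φ : MF A, φ.varsBelow k → ∀ c, c ∈ Y → ∀ d : X,
      satM R θ d (α {z | z ∈ Y ∧ modEqAll R θ k c z}) →
      satM R θ d (gammaF R m hTfin.toFinset.toList α) →
      (satM R θ c φ ↔ satM R θ d φ) := by
  have memTs : ∀ τ : Set X, τ ∈ hTfin.toFinset.toList ↔ τ ∈ T := by
    intro τ
    rw [Finset.mem_toList, Set.Finite.mem_toFinset]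
  have clsT : ∀ c, c ∈ Y → {z | z ∈ Y ∧ modEqAll R θ k c z} ∈ T := by
    intro c hc
    rw [hT]
    exact ⟨c, hc, rfl⟩
  have memcls : ∀ c, c ∈ Y → c ∈ {z | z ∈ Y ∧ modEqAll R θ k c z} :=
    fun c hc => ⟨hc, fun ψ _ => Iff.rfl⟩
  have satα : ∀ τ ∈ T, ∀ u, u ∈ Y → (satM R θ u (α τ) ↔ u ∈ τ) := by
    intro τ hτ u hu
    rw [← satM_restrict hYup (α τ) ⟨u, hu⟩]
    exact hαext τ hτ ⟨u, hu⟩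
  intro φ
  induction φ with
  | var n =>
    intro hvb c hc d hα hγ
    have := hαatoms _ (clsT c hc) n hvb d hα c (memcls c hc)
    simpa [satM] using this.symm
  | bot => intro _ c hc d _ _; simp [satM]
  | imp φ ψ ihφ ihψ =>
    intro hvb c hc d hα hγ
    rw [satM_imp, satM_imp, ihφ hvb.1 c hc d hα hγ, ihψ hvb.2 c hc d hα hγ]
  | dia i φ ih =>
    intro hvb c hc d hα hγ
    have hvb' : φ.varsBelow k := hvb
    unfold gammaF at hγ
    obtain ⟨hd1, hd2⟩ := (satM_and R θ d _ _).1 hγ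
    have hγpers : ∀ d', unionRel R d d' →
        satM R θ d' (gammaF R m hTfin.toFinset.toList α) := by
      intro d' hdd'
      have hstep : relPow (unionRel R) 1 d d' := ⟨d', hdd', rfl⟩
      unfold gammaF
      exact (satM_and R θ d' _ _).2
        ⟨boxSle_persist hm hd1 hstep, boxSle_persist hm hd2 hstep⟩
    have hall := (satM_bigAnd R θ d _).1 (boxSle_self hd1)
    simp only [satM]
    constructor
    · rintro ⟨c', hcc', hc'φ⟩
      have hc'Y : c' ∈ Y := hYup i c hc c' hcc'
      have hcond : ∃ x ∈ {z | z ∈ Y ∧ modEqAll R θ k c z},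
          ∃ y ∈ {z | z ∈ Y ∧ modEqAll R θ k c' z}, R i x y :=
        ⟨c, memcls c hc, c', memcls c' hc'Y, hcc'⟩
      have hsat := hall _ (List.mem_flatMap.2 ⟨i, by simp,
        List.mem_flatMap.2 ⟨{z | z ∈ Y ∧ modEqAll R θ k c z}, (memTs _).2 (clsT c hc),
          List.mem_map.2 ⟨{z | z ∈ Y ∧ modEqAll R θ k c' z}, (memTs _).2 (clsT c' hc'Y),
            rfl⟩⟩⟩)
      rw [if_pos hcond] at hsat
      obtain ⟨d', hdd', hd'α⟩ := (satM_imp R θ d _ _).1 hsat hα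
      exact ⟨d', hdd', (ih hvb' c' hc'Y d' hd'α (hγpers d' ⟨i, hdd'⟩)).1 hc'φ⟩
    · rintro ⟨d', hdd', hd'φ⟩
      have hstep : relPow (unionRel R) 1 d d' := ⟨d', ⟨i, hdd'⟩, rfl⟩
      have hd'2 : satM R θ d' (MF.bigOr (hTfin.toFinset.toList.map α)) :=
        boxSle_self (boxSle_persist hm hd2 hstep)
      obtain ⟨ψ, hψmem, hψ⟩ := (satM_bigOr R θ d' _).1 hd'2
      obtain ⟨τ₂, hτ₂Ts, rfl⟩ := List.mem_map.1 hψmem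
      have hτ₂T : τ₂ ∈ T := (memTs _).1 hτ₂Ts
      by_cases hcond : ∃ x ∈ {z | z ∈ Y ∧ modEqAll R θ k c z}, ∃ y ∈ τ₂, R i x y
      · obtain ⟨a', ⟨ha'Y, hca'⟩, b', hb'τ₂, hab⟩ := hcond
        have hb'Y : b' ∈ Y := mem_in_Y (hT ▸ hτ₂T) hb'τ₂
        have hsata' : satM R θ a' (MF.dia i (α τ₂)) :=
          ⟨b', hab, (satα τ₂ hτ₂T b' hb'Y).2 hb'τ₂⟩
        have hsatc : satM R θ c (MF.dia i (α τ₂)) :=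
          (hca' (MF.dia i (α τ₂)) (hαvars τ₂ hτ₂T)).2 hsata'
        obtain ⟨c', hcc', hc'sat⟩ := hsatc
        have hc'Y : c' ∈ Y := hYup i c hc c' hcc'
        have hc'τ₂ : c' ∈ τ₂ := (satα τ₂ hτ₂T c' hc'Y).1 hc'sat
        have hτeq : τ₂ = {z | z ∈ Y ∧ modEqAll R θ k c' z} := cls_eq' (hT ▸ hτ₂T) hc'τ₂
        have hd'α : satM R θ d' (α {z | z ∈ Y ∧ modEqAll R θ k c' z}) := hτeq ▸ hψ
        exact ⟨c', hcc', (ih hvb' c' hc'Y d' hd'α (hγpers d' ⟨i, hdd'⟩)).2 hd'φ⟩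
      · exfalso
        have hsat := hall _ (List.mem_flatMap.2 ⟨i, by simp,
          List.mem_flatMap.2 ⟨{z | z ∈ Y ∧ modEqAll R θ k c z}, (memTs _).2 (clsT c hc),
            List.mem_map.2 ⟨τ₂, hτ₂Ts, rfl⟩⟩⟩)
        rw [if_neg hcond] at hsat
        exact (satM_neg R θ d _).1 ((satM_imp R θ d _ _).1 hsat hα) ⟨d', hdd', hψ⟩

end AuxStmt15

/-- Definability Lemma: with `T = Y/∼_Y` finite and formulas `α(τ)`
defining the classes in `M↾Y` (and deciding the variables `p_l`, `l < k`), the formula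
`β(a) = α([a]) ∧ γ` defines the `∼`-class of each `a ∈ Y` in the whole model `M`. -/
theorem stmt15 {A X : Type} [Fintype A] (R : A → X → X → Prop) (θ : ℕ → Set X)
    (k m : ℕ) (hm : mTransitive (unionRel R) m)
    (Y : Set X) (hYne : Y.Nonempty) (hYup : UpsetIn R Y)
    (T : Set (Set X))
    (hT : T = {τ : Set X | ∃ y ∈ Y, τ = {z | z ∈ Y ∧ modEqAll R θ k y z}})
    (hTfin : T.Finite)
    (α : Set X → MF A)
    (hαvars : ∀ τ ∈ T, (α τ).varsBelow k)
    (hαext : ∀ τ ∈ T, ∀ u : Y, satM (restrR R Y) (restrV θ Y) u (α τ) ↔ (u : X) ∈ τ)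
    (hαatoms : ∀ τ ∈ T, ∀ l < k, ∀ b : X, satM R θ b (α τ) →
      ∀ y ∈ τ, (b ∈ θ l ↔ y ∈ θ l)) :
    ∀ a ∈ Y, ∀ b : X,
      satM R θ b
        (MF.and (α {z | z ∈ Y ∧ modEqAll R θ k a z}) (gammaF R m hTfin.toFinset.toList α))
      ↔ modEqAll R θ k a b := by
  have memTs : ∀ τ : Set X, τ ∈ hTfin.toFinset.toList ↔ τ ∈ T := by
    intro τ
    rw [Finset.mem_toList, Set.Finite.mem_toFinset]
  have clsT : ∀ c, c ∈ Y → {z | z ∈ Y ∧ modEqAll R θ k c z} ∈ T := by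
    intro c hc
    rw [hT]
    exact ⟨c, hc, rfl⟩
  have memcls : ∀ c, c ∈ Y → c ∈ {z | z ∈ Y ∧ modEqAll R θ k c z} :=
    fun c hc => ⟨hc, fun ψ _ => Iff.rfl⟩
  have satα : ∀ τ ∈ T, ∀ u, u ∈ Y → (satM R θ u (α τ) ↔ u ∈ τ) := by
    intro τ hτ u hu
    rw [← satM_restrict hYup (α τ) ⟨u, hu⟩]
    exact hαext τ hτ ⟨u, hu⟩
  intro a ha b
  constructor
  · intro hb
    obtain ⟨hbα, hbγ⟩ := (satM_and R θ b _ _).1 hb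
    intro φ hφ
    exact mainClaim R θ k m hm Y hYup T hT hTfin α hαvars hαext hαatoms φ hφ a ha b hbα hbγ
  · intro hab
    have hβvars : (MF.and (α {z | z ∈ Y ∧ modEqAll R θ k a z})
        (gammaF R m hTfin.toFinset.toList α)).varsBelow k :=
      varsBelow_and (hαvars _ (clsT a ha))
        (varsBelow_gammaF (fun τ hτ => hαvars τ ((memTs τ).1 hτ)))
    refine (hab _ hβvars).1 ?_
    refine (satM_and R θ a _ _).2 ⟨(satα _ (clsT a ha) a ha).2 (memcls a ha), ?_⟩
    unfold gammaF
    refine (satM_and R θ a _ _).2 ⟨?_, ?_⟩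
    · rw [satM_boxSle]
      intro i hi e he
      have heY : e ∈ Y := upset_relPow hYup i a e ha he
      rw [satM_bigAnd]
      intro ψ hψmem
      simp only [List.mem_flatMap, List.mem_map] at hψmem
      obtain ⟨j, -, τ₁, hτ₁, τ₂, hτ₂, rfl⟩ := hψmem
      have hτ₁T : τ₁ ∈ T := (memTs _).1 hτ₁
      have hτ₂T : τ₂ ∈ T := (memTs _).1 hτ₂
      split
      · rename_i hcond
        rw [satM_imp]
        intro heτ₁
        have heτ₁' : e ∈ τ₁ := (satα τ₁ hτ₁T e heY).1 heτ₁
        obtain ⟨a', ha'τ₁, b', hb'τ₂, hab'⟩ := hcond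
        have hτ₁eq : τ₁ = {z | z ∈ Y ∧ modEqAll R θ k a' z} := cls_eq' (hT ▸ hτ₁T) ha'τ₁
        have ha'e : modEqAll R θ k a' e := (hτ₁eq ▸ heτ₁').2
        have hb'Y : b' ∈ Y := mem_in_Y (hT ▸ hτ₂T) hb'τ₂
        have hsata' : satM R θ a' (MF.dia j (α τ₂)) :=
          ⟨b', hab', (satα τ₂ hτ₂T b' hb'Y).2 hb'τ₂⟩
        exact (ha'e (MF.dia j (α τ₂)) (hαvars τ₂ hτ₂T)).1 hsata'
      · rename_i hcond
        rw [satM_imp]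
        intro heτ₁
        rw [satM_neg]
        rintro ⟨f, hef, hfα⟩
        have hfY : f ∈ Y := hYup j e heY f hef
        exact hcond ⟨e, (satα τ₁ hτ₁T e heY).1 heτ₁, f, (satα τ₂ hτ₂T f hfY).1 hfα, hef⟩
    · rw [satM_boxSle]
      intro i hi e he
      have heY : e ∈ Y := upset_relPow hYup i a e ha he
      rw [satM_bigOr]
      exact ⟨α {z | z ∈ Y ∧ modEqAll R θ k e z},
        List.mem_map.2 ⟨_, (memTs _).2 (clsT e heY), rfl⟩,
        (satα _ (clsT e heY) e heY).2 (memcls e heY)⟩
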